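/- arXiv:math/0511191 — 6 statements merged into one kernel-verified Lean document; each statement's English description precedes it below -/
import Mathlib

section
/- For positive integers a, m, n with a·m ≤ n, the group GL_n(ℤ) has a subgroup of order (m+1)!^a · a!. -/
/-!
The symmetric group `S_{m+1}` acts faithfully on the root lattice
`A_m = {z ∈ ℤ^{m+1} | ∑ zᵢ = 0}`, a free `ℤ`-module of rank `m`: if `σ i ≠ i`, then `σ` moves
`eᵢ - e_{σ i}`. Letting `S_a` permute `a` copies of `A_m` gives a faithful action of the wreath
product `S_{m+1} ≀ S_a`, of order `(m+1)!^a · a!`, on `A_m^a ≅ ℤ^{am}`; extending by the identity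
on a complement `ℤ^{n-am}` embeds it in `GL_n(ℤ)`.
-/

open Module Equiv Function

section Wreath

variable (ι G : Type*) [Group G]

def Equiv.Perm.arrowMulAut : Perm ι →* MulAut (ι → G) where
  toFun σ := MulEquiv.arrowCongr σ (MulEquiv.refl G)
  map_one' := rfl
  map_mul' _ _ := rfl

@[simp] theorem Equiv.Perm.arrowMulAut_apply (σ : Perm ι) (f : ι → G) (i : ι) :
    Perm.arrowMulAut ι G σ f i = f (σ⁻¹ i) := rfl

abbrev PermWreathProduct := (ι → G) ⋊[Equiv.Perm.arrowMulAut ι G] Perm ι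

theorem PermWreathProduct.card [Finite ι] :
    Nat.card (PermWreathProduct ι G) = Nat.card G ^ Nat.card ι * (Nat.card ι).factorial := by
  rw [Nat.card_congr SemidirectProduct.equivProd, Nat.card_prod, Nat.card_fun, Nat.card_perm]

variable (R M : Type*) [Semiring R] [AddCommMonoid M] [Module R M]

def Equiv.Perm.arrowLinearEquiv : Perm ι →* ((ι → M) ≃ₗ[R] (ι → M)) where
  toFun σ := LinearEquiv.funCongrLeft R M σ.symm
  map_one' := rfl
  map_mul' _ _ := rfl

@[simp] theorem Equiv.Perm.arrowLinearEquiv_apply (σ : Perm ι) (x : ι → M) (i : ι) :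
    Perm.arrowLinearEquiv ι R M σ x i = x (σ⁻¹ i) := rfl

@[simp] theorem Equiv.Perm.arrowLinearEquiv_symm_apply (σ : Perm ι) (x : ι → M) (i : ι) :
    (Perm.arrowLinearEquiv ι R M σ).symm x i = x (σ i) := rfl

variable {ι G R M}

def MonoidHom.piCongrRight (ρ : G →* (M ≃ₗ[R] M)) : (ι → G) →* ((ι → M) ≃ₗ[R] (ι → M)) where
  toFun f := LinearEquiv.piCongrRight fun i => ρ (f i)
  map_one' := by ext; simp
  map_mul' _ _ := by ext; simp

@[simp] theorem MonoidHom.piCongrRight_apply (ρ : G →* (M ≃ₗ[R] M)) (f : ι → G) (x : ι → M)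
    (i : ι) : ρ.piCongrRight f x i = ρ (f i) (x i) := rfl

def MonoidHom.wreathRep (ρ : G →* (M ≃ₗ[R] M)) : PermWreathProduct ι G →* ((ι → M) ≃ₗ[R] (ι → M)) :=
  SemidirectProduct.lift ρ.piCongrRight (Perm.arrowLinearEquiv ι R M) fun σ => by
    ext f x i
    simp [MulAut.conj]

theorem MonoidHom.wreathRep_injective [Nontrivial M] {ρ : G →* (M ≃ₗ[R] M)}
    (hρ : Injective ρ) : Injective (ρ.wreathRep (ι := ι)) := by
  classical
  rw [injective_iff_map_eq_one]
  rintro ⟨f, σ⟩ h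
  have hfix (x : ι → M) (i : ι) : ρ (f i) (x (σ⁻¹ i)) = x i :=
    congrFun (LinearEquiv.congr_fun h x) i
  obtain ⟨v, hv⟩ := exists_ne (0 : M)
  have hσ (i : ι) : σ⁻¹ i = i := by
    by_contra hne
    have := hfix (Pi.single (σ⁻¹ i) v) i
    rw [Pi.single_eq_same, Pi.single_eq_of_ne (Ne.symm hne), LinearEquiv.map_eq_zero_iff] at this
    exact hv this
  have hf : f = 1 := by
    ext i : 1
    refine hρ (LinearEquiv.ext fun y => ?_)
    simpa [hσ, Pi.single_eq_same] using hfix (Pi.single i y) i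
  obtain rfl : σ = 1 := inv_eq_one.mp (Perm.ext hσ)
  subst hf
  rfl

end Wreath

section SumZero

variable (ι : Type*) [Fintype ι]

def sumZeroLattice : Submodule ℤ (ι → ℤ) :=
  LinearMap.ker (∑ i : ι, (LinearMap.proj i : (ι → ℤ) →ₗ[ℤ] ℤ))

variable {ι}

theorem mem_sumZeroLattice {v : ι → ℤ} : v ∈ sumZeroLattice ι ↔ ∑ i, v i = 0 := by
  simp [sumZeroLattice]

theorem single_sub_single_mem_sumZeroLattice [DecidableEq ι] (i j : ι) :
    Pi.single i 1 - Pi.single j 1 ∈ sumZeroLattice ι := by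
  simp [mem_sumZeroLattice, Finset.sum_sub_distrib]

variable (ι)

noncomputable def sumZeroRep : Perm ι →* (sumZeroLattice ι ≃ₗ[ℤ] sumZeroLattice ι) where
  toFun σ := (Perm.arrowLinearEquiv ι ℤ ℤ σ).ofSubmodules _ _ <| by
    ext v
    simp [Submodule.map_equiv_eq_comap_symm, mem_sumZeroLattice, Equiv.sum_comp]
  map_one' := rfl
  map_mul' _ _ := rfl

variable {ι}

@[simp] theorem sumZeroRep_apply_coe (σ : Perm ι) (v : sumZeroLattice ι) (i : ι) :
    (sumZeroRep ι σ v : ι → ℤ) i = (v : ι → ℤ) (σ⁻¹ i) := rfl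

theorem sumZeroRep_injective : Injective (sumZeroRep ι) := by
  classical
  rw [injective_iff_map_eq_one]
  intro σ hσ
  ext i
  by_contra hne
  rw [Perm.one_apply] at hne
  have key := congrFun (congrArg Subtype.val
    (LinearEquiv.congr_fun hσ ⟨_, single_sub_single_mem_sumZeroLattice i (σ i)⟩)) (σ i)
  simp [hne, Ne.symm hne] at key

instance [Nontrivial ι] : Nontrivial (sumZeroLattice ι) := by
  classical
  obtain ⟨i, j, hij⟩ := exists_pair_ne ι
  refine ⟨⟨⟨_, single_sub_single_mem_sumZeroLattice i j⟩, 0, fun h => ?_⟩⟩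
  have := congrFun (congrArg Subtype.val h) i
  simp [hij] at this

theorem finrank_sumZeroLattice_add_one [Nonempty ι] :
    finrank ℤ (sumZeroLattice ι) + 1 = Fintype.card ι := by
  classical
  set s := ∑ i : ι, (LinearMap.proj i : (ι → ℤ) →ₗ[ℤ] ℤ)
  have hs : Surjective s := fun c => ⟨Pi.single (Classical.arbitrary ι) c, by simp [s]⟩
  have := Submodule.finrank_quotient_add_finrank (LinearMap.ker s)
  rwa [(s.quotKerEquivOfSurjective hs).finrank_eq, finrank_self, finrank_pi, add_comm] at this

theorem finrank_sumZeroLattice_fin (k : ℕ) : finrank ℤ (sumZeroLattice (Fin (k + 1))) = k := by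
  simpa using finrank_sumZeroLattice_add_one (ι := Fin (k + 1))

end SumZero

section GeneralLinearGroup

variable {R M : Type*} [CommRing R] [AddCommGroup M] [Module R M]

variable (P : Type*) [AddCommGroup P] [Module R P] in
def LinearEquiv.prodCongrReflHom : (M ≃ₗ[R] M) →* ((M × P) ≃ₗ[R] (M × P)) where
  toFun u := u.prodCongr (LinearEquiv.refl R P)
  map_one' := rfl
  map_mul' _ _ := rfl

theorem LinearEquiv.prodCongrReflHom_injective (P : Type*) [AddCommGroup P] [Module R P] :
    Injective (prodCongrReflHom P : (M ≃ₗ[R] M) →* _) := fun _ _ h =>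
  LinearEquiv.ext fun x => congrArg Prod.fst (LinearEquiv.congr_fun h (x, 0))

theorem exists_injective_toGL_of_finrank_le [Nontrivial R] [Module.Free R M] [Module.Finite R M]
    {n : ℕ} (h : finrank R M ≤ n) : ∃ φ : (M ≃ₗ[R] M) →* GL (Fin n) R, Injective φ := by
  let P := Fin (n - finrank R M) → R
  let b : Basis (Fin n) R (M × P) :=
    finBasisOfFinrankEq R (M × P) (by rw [finrank_prod, finrank_pi, Fintype.card_fin]; omega)
  let toGL : ((M × P) ≃ₗ[R] (M × P)) ≃* GL (Fin n) R :=
    (LinearMap.GeneralLinearGroup.generalLinearEquiv R (M × P)).symm.trans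
      (Matrix.GeneralLinearGroup.toLin' b).symm
  exact ⟨toGL.toMonoidHom.comp (LinearEquiv.prodCongrReflHom P),
    toGL.injective.comp (LinearEquiv.prodCongrReflHom_injective P)⟩

end GeneralLinearGroup

theorem glnZ_has_subgroup_of_order_general (a m n : ℕ) (hm : 0 < m) (h : a * m ≤ n) :
    ∃ G : Subgroup (GL (Fin n) ℤ),
      Nat.card G = (Nat.factorial (m + 1)) ^ a * Nat.factorial a := by
  obtain ⟨k, rfl⟩ : ∃ k, m = k + 1 := ⟨m - 1, by omega⟩
  have hrank : finrank ℤ (Fin a → sumZeroLattice (Fin (k + 2))) = a * (k + 1) := by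
    simp [finrank_pi_fintype, finrank_sumZeroLattice_fin]
  obtain ⟨φ, hφ⟩ := exists_injective_toGL_of_finrank_le (hrank.trans_le h)
  let ψ := φ.comp ((sumZeroRep (Fin (k + 2))).wreathRep (ι := Fin a))
  have hψ : Injective ψ := hφ.comp (MonoidHom.wreathRep_injective sumZeroRep_injective)
  refine ⟨ψ.range, ?_⟩
  rw [← Nat.card_congr (MonoidHom.ofInjective hψ).toEquiv, PermWreathProduct.card]
  simp [Fintype.card_perm]

/-- For positive integers a, m, n with a·m ≤ n, the group GL_n(ℤ) has a
subgroup of order (m+1)!^a · a!. -/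
theorem glnZ_has_subgroup_of_order (a m n : ℕ) (ha : 0 < a) (hm : 0 < m)
    (hn : 0 < n) (h : a * m ≤ n) :
    ∃ G : Subgroup (GL (Fin n) ℤ),
      Nat.card G = (Nat.factorial (m + 1)) ^ a * Nat.factorial a :=
  glnZ_has_subgroup_of_order_general a m n hm h
end

section
/- Let g ∈ GL_n(ℂ) be a matrix of finite order a power of a prime p, with tr(g) ∈ ℚ. Then tr(g) is an integer of the form n − p·t for some integer t with 0 ≤ t ≤ ⌊n/(p−1)⌋. Moreover tr(g) = n only if g is the identity matrix. -/
/-!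
The eigenvalues of `g` are `p^(r+1)`-th roots of unity `ζ ^ e`, so `tr g` is an algebraic integer,
hence an integer `z` once it is rational. The integer polynomial `∑ X ^ e - z` vanishes at `ζ`, so
it is divisible by the cyclotomic polynomial `Φ_{p^(r+1)}`. Evaluating at `1` gives `p ∣ n - z`;
evaluating at the conjugates `ζ ^ k`, `k` prime to `p`, gives `∑ ζ ^ (e k) = z`. Summing over these
`k` (the Galois trace of `ℚ(ζ)/ℚ`) yields `φ(p^(r+1)) z = ∑ c(ζ ^ e)`, where the Ramanujan sum `c`
lies between `-p^r` and `φ(p^(r+1))` and reaches the upper value only at `1`. Hence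
`-n ≤ (p - 1) z ≤ (p - 1) n`, and `z = n` forces every eigenvalue to be `1`: then `g` is unipotent
and, having finite order, semisimple, so `g = 1`.
-/

open Polynomial Finset
open scoped Nat

section RamanujanSum

variable {K : Type*} [Field K] [DecidableEq K] {μ : K}

theorem geom_sum_of_pow_eq_one {N : ℕ} (hμ : μ ^ N = 1) :
    ∑ k ∈ range N, μ ^ k = if μ = 1 then (N : K) else 0 := by
  split_ifs with h
  · simp [h]
  · rw [geom_sum_eq h, hμ, sub_self, zero_div]

theorem Finset.sum_range_mul_filter_dvd {M : Type*} [AddCommMonoid M] {p : ℕ} (hp : 0 < p)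
    (q : ℕ) (f : ℕ → M) : ∑ k ∈ range (p * q) with p ∣ k, f k = ∑ j ∈ range q, f (p * j) := by
  rw [← sum_image fun _ _ _ _ h => Nat.eq_of_mul_eq_mul_left hp h]
  congr 1
  ext k
  simp only [mem_filter, mem_range, mem_image]
  constructor
  · rintro ⟨hk, j, rfl⟩
    exact ⟨j, Nat.lt_of_mul_lt_mul_left hk, rfl⟩
  · rintro ⟨j, hj, rfl⟩
    exact ⟨Nat.mul_lt_mul_of_pos_left hj hp, dvd_mul_right p j⟩

/-- The Ramanujan sum `c_{p^(r+1)}(e)`, as a function of `μ = ζ ^ e` for a primitive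
`p^(r+1)`-th root of unity `ζ`. -/
def ramanujanSumPrimePow (p r : ℕ) (μ : K) : ℤ :=
  (if μ = 1 then (p : ℤ) ^ (r + 1) else 0) - if μ ^ p = 1 then (p : ℤ) ^ r else 0

theorem sum_pow_coprime_eq_ramanujanSumPrimePow {p r : ℕ} (hp : p.Prime)
    (hμ : μ ^ p ^ (r + 1) = 1) :
    ∑ k ∈ range (p ^ (r + 1)) with (p ^ (r + 1)).Coprime k, μ ^ k =
      ramanujanSumPrimePow p r μ := by
  have hsplit := sum_filter_add_sum_filter_not (range (p ^ (r + 1)))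
    (p ^ (r + 1)).Coprime (μ ^ ·)
  have hdvd : ∀ k, ¬ (p ^ (r + 1)).Coprime k ↔ p ∣ k := fun k => by
    rw [Nat.coprime_pow_left_iff r.succ_pos, hp.coprime_iff_not_dvd, not_not]
  rw [filter_congr fun k _ => hdvd k, geom_sum_of_pow_eq_one hμ, pow_succ' p r,
    sum_range_mul_filter_dvd hp.pos] at hsplit
  simp_rw [pow_mul] at hsplit
  rw [geom_sum_of_pow_eq_one (by rwa [← pow_mul, ← pow_succ'])] at hsplit
  rw [ramanujanSumPrimePow]
  push_cast [pow_succ'] at hsplit ⊢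
  linear_combination hsplit

theorem neg_pow_le_ramanujanSumPrimePow (p r : ℕ) (μ : K) :
    -(p : ℤ) ^ r ≤ ramanujanSumPrimePow p r μ := by
  have : (0 : ℤ) ≤ p ^ r := by positivity
  have : (0 : ℤ) ≤ p ^ (r + 1) := by positivity
  unfold ramanujanSumPrimePow
  split_ifs <;> linarith

theorem ramanujanSumPrimePow_one {p : ℕ} (hp : p.Prime) (r : ℕ) :
    ramanujanSumPrimePow p r (1 : K) = φ (p ^ (r + 1)) := by
  rw [ramanujanSumPrimePow, Nat.totient_prime_pow_succ hp, Nat.cast_mul, Nat.cast_sub hp.one_le]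
  simp only [one_pow, if_true]
  push_cast
  ring

theorem ramanujanSumPrimePow_lt_totient {p : ℕ} (hp : p.Prime) (r : ℕ) (hμ : μ ≠ 1) :
    ramanujanSumPrimePow p r μ < φ (p ^ (r + 1)) := by
  have : 0 < φ (p ^ (r + 1)) := Nat.totient_pos.2 (pow_pos hp.pos _)
  have : (0 : ℤ) ≤ p ^ r := by positivity
  rw [ramanujanSumPrimePow, if_neg hμ]
  split_ifs <;> omega

theorem ramanujanSumPrimePow_le_totient {p : ℕ} (hp : p.Prime) (r : ℕ) (μ : K) :
    ramanujanSumPrimePow p r μ ≤ φ (p ^ (r + 1)) := by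
  rcases eq_or_ne μ 1 with rfl | hμ
  · exact (ramanujanSumPrimePow_one hp r).le
  · exact (ramanujanSumPrimePow_lt_totient hp r hμ).le

end RamanujanSum

namespace IsPrimitiveRoot

theorem exists_map_pow_eq {R : Type*} [CommRing R] [IsDomain R] {ζ : R} {m : ℕ} [NeZero m]
    (hζ : IsPrimitiveRoot ζ m) {M : Multiset R} (hM : ∀ μ ∈ M, μ ^ m = 1) :
    ∃ E : Multiset ℕ, E.map (ζ ^ ·) = M := by
  choose! a _ ha using fun μ hμ => hζ.eq_pow_of_pow_eq_one (hM μ hμ)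
  refine ⟨M.map a, ?_⟩
  rw [Multiset.map_map]
  exact (Multiset.map_congr rfl ha).trans M.map_id

variable {K : Type*} [Field K] [CharZero K] {ζ : K} {E : Multiset ℕ} {z : ℤ}

theorem exists_int_eq_sum_map_pow {m : ℕ} (hζ : IsPrimitiveRoot ζ m) (hm : 0 < m) {q : ℚ}
    (hq : (E.map (ζ ^ ·)).sum = q) : ∃ z : ℤ, (E.map (ζ ^ ·)).sum = z := by
  have hint : IsIntegral ℤ (E.map (ζ ^ ·)).sum :=
    IsIntegral.multiset_sum fun _ hx => by
      obtain ⟨e, -, rfl⟩ := Multiset.mem_map.1 hx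
      exact (hζ.isIntegral hm).pow e
  rw [hq, ← eq_ratCast (algebraMap ℚ K), isIntegral_algebraMap_iff (algebraMap ℚ K).injective]
    at hint
  obtain ⟨z, rfl⟩ := IsIntegrallyClosed.isIntegral_iff.1 hint
  exact ⟨z, by simp [hq]⟩

theorem cyclotomic_dvd_sum_X_pow_sub_C {m : ℕ} (hζ : IsPrimitiveRoot ζ m) (hm : 0 < m)
    (hE : (E.map (ζ ^ ·)).sum = z) : cyclotomic m ℤ ∣ (E.map (X ^ ·)).sum - C z := by
  rw [cyclotomic_eq_minpoly hζ hm]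
  refine minpoly.isIntegrallyClosed_dvd (hζ.isIntegral hm) ?_
  simp [map_multiset_sum, Multiset.map_map, hE]

theorem sum_map_pow_pow_of_coprime {m : ℕ} (hζ : IsPrimitiveRoot ζ m) (hm : 0 < m)
    (hE : (E.map (ζ ^ ·)).sum = z) {k : ℕ} (hk : m.Coprime k) :
    (E.map fun e => (ζ ^ e) ^ k).sum = z := by
  obtain ⟨f, hf⟩ := hζ.cyclotomic_dvd_sum_X_pow_sub_C hm hE
  have hroot : aeval (ζ ^ k) (cyclotomic m ℤ) = 0 := by
    rw [cyclotomic_eq_minpoly (hζ.pow_of_coprime k hk.symm) hm]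
    exact minpoly.aeval ℤ _
  have := congrArg (aeval (ζ ^ k)) hf
  rw [map_mul, hroot, zero_mul, map_sub, map_multiset_sum, Multiset.map_map, aeval_C,
    sub_eq_zero] at this
  simpa [pow_right_comm] using this

theorem prime_dvd_card_sub {p r : ℕ} [Fact p.Prime] (hζ : IsPrimitiveRoot ζ (p ^ (r + 1)))
    (hE : (E.map (ζ ^ ·)).sum = z) : (p : ℤ) ∣ E.card - z := by
  obtain ⟨f, hf⟩ := hζ.cyclotomic_dvd_sum_X_pow_sub_C (pow_pos (Fact.out : p.Prime).pos _) hE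
  refine ⟨f.eval 1, ?_⟩
  have := congrArg (evalRingHom 1) hf
  rw [map_sub, map_multiset_sum, Multiset.map_map, map_mul] at this
  simpa using this

variable [DecidableEq K] {p r : ℕ}

theorem totient_mul_eq_sum_ramanujanSumPrimePow (hp : p.Prime)
    (hζ : IsPrimitiveRoot ζ (p ^ (r + 1))) (hE : (E.map (ζ ^ ·)).sum = z) :
    (φ (p ^ (r + 1)) : ℤ) * z = (E.map fun e => ramanujanSumPrimePow p r (ζ ^ e)).sum := by
  set S := {k ∈ range (p ^ (r + 1)) | (p ^ (r + 1)).Coprime k}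
  have hS : ∀ k ∈ S, (E.map fun e => (ζ ^ e) ^ k).sum = z := fun k hk =>
    hζ.sum_map_pow_pow_of_coprime (pow_pos hp.pos _) hE (mem_filter.1 hk).2
  have hc : ∀ e, ∑ k ∈ S, (ζ ^ e) ^ k = ramanujanSumPrimePow p r (ζ ^ e) := fun e =>
    sum_pow_coprime_eq_ramanujanSumPrimePow hp (by rw [pow_right_comm, hζ.pow_eq_one, one_pow])
  apply Int.cast_injective (α := K)
  calc ((φ (p ^ (r + 1)) * z : ℤ) : K) = ∑ k ∈ S, (E.map fun e => (ζ ^ e) ^ k).sum := by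
        rw [sum_congr rfl hS, sum_const, ← Nat.totient_eq_card_coprime, nsmul_eq_mul]
        push_cast
        rfl
    _ = (E.map fun e => ∑ k ∈ S, (ζ ^ e) ^ k).sum := Multiset.sum_map_sum.symm
    _ = _ := by simp [hc, Int.cast_multiset_sum, Multiset.map_map]

theorem neg_card_le_sub_one_mul (hp : p.Prime) (hζ : IsPrimitiveRoot ζ (p ^ (r + 1)))
    (hE : (E.map (ζ ^ ·)).sum = z) : -(E.card : ℤ) ≤ (p - 1) * z := by
  have key := hζ.totient_mul_eq_sum_ramanujanSumPrimePow hp hE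
  have hlow :
      E.card * (-(p : ℤ) ^ r) ≤ (E.map fun e => ramanujanSumPrimePow p r (ζ ^ e)).sum := by
    simpa using Multiset.sum_map_le_sum_map (fun _ => -(p : ℤ) ^ r) _
      fun e _ => neg_pow_le_ramanujanSumPrimePow p r (ζ ^ e)
  rw [Nat.totient_prime_pow_succ hp, Nat.cast_mul, Nat.cast_sub hp.one_le] at key
  have : (0 : ℤ) < p ^ r := by have := hp.pos; positivity
  push_cast at key
  nlinarith

theorem le_card (hp : p.Prime) (hζ : IsPrimitiveRoot ζ (p ^ (r + 1)))
    (hE : (E.map (ζ ^ ·)).sum = z) : z ≤ E.card := by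
  have key := hζ.totient_mul_eq_sum_ramanujanSumPrimePow hp hE
  have hup :
      (E.map fun e => ramanujanSumPrimePow p r (ζ ^ e)).sum ≤ E.card * φ (p ^ (r + 1)) := by
    simpa [mul_comm] using Multiset.sum_map_le_sum_map _ (fun _ => (φ (p ^ (r + 1)) : ℤ))
      fun e _ => ramanujanSumPrimePow_le_totient hp r (ζ ^ e)
  have : (0 : ℤ) < φ (p ^ (r + 1)) := by exact_mod_cast Nat.totient_pos.2 (pow_pos hp.pos _)
  nlinarith

theorem pow_eq_one_of_eq_card (hp : p.Prime) (hζ : IsPrimitiveRoot ζ (p ^ (r + 1)))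
    (hE : (E.map (ζ ^ ·)).sum = z) (hz : z = E.card) : ∀ e ∈ E, ζ ^ e = 1 := by
  by_contra! ⟨e, he, hne⟩
  have key := hζ.totient_mul_eq_sum_ramanujanSumPrimePow hp hE
  have hlt : (E.map fun e => ramanujanSumPrimePow p r (ζ ^ e)).sum <
      (E.map fun _ => (φ (p ^ (r + 1)) : ℤ)).sum :=
    Multiset.sum_lt_sum (fun e _ => ramanujanSumPrimePow_le_totient hp r (ζ ^ e))
      ⟨e, he, ramanujanSumPrimePow_lt_totient hp r hne⟩
  simp [← key, hz, mul_comm] at hlt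

theorem exists_eq_card_sub_mul (hp : p.Prime) (hζ : IsPrimitiveRoot ζ (p ^ (r + 1)))
    (hE : (E.map (ζ ^ ·)).sum = z) : ∃ t : ℕ, t ≤ E.card / (p - 1) ∧ z = E.card - p * t := by
  have := Fact.mk hp
  obtain ⟨s, hs⟩ := hζ.prime_dvd_card_sub hE
  have hz := hζ.le_card hp hE
  have hlow := hζ.neg_card_le_sub_one_mul hp hE
  have hp2 : (2 : ℤ) ≤ p := by exact_mod_cast hp.two_le
  lift s to ℕ using by nlinarith
  refine ⟨s, (Nat.le_div_iff_mul_le (by have := hp.two_le; omega)).2 ?_, by linarith⟩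
  zify [hp.one_le]
  nlinarith

end IsPrimitiveRoot

namespace Matrix

variable {n K : Type*} [Fintype n] [DecidableEq n] [Field K] {A : Matrix n n K}

theorem pow_eq_one_of_mem_roots_charpoly {m : ℕ} (hA : A ^ m = 1) {μ : K}
    (hμ : μ ∈ A.charpoly.roots) : μ ^ m = 1 := by
  have hσ : μ ^ m ∈ spectrum K (A ^ m) :=
    spectrum.pow_mem_pow A m (mem_spectrum_iff_isRoot_charpoly.2 (isRoot_of_mem_roots hμ))
  rcases subsingleton_or_nontrivial (Matrix n n K) with _ | _
  · simp [spectrum.of_subsingleton] at hσ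
  · simpa [hA, spectrum.one_eq] using hσ

theorem isNilpotent_sub_one_of_forall_mem_roots_charpoly [IsAlgClosed K]
    (h : ∀ μ ∈ A.charpoly.roots, μ = 1) : IsNilpotent (A - 1) := by
  have hroots : A.charpoly.roots = Multiset.replicate (Fintype.card n) 1 :=
    Multiset.eq_replicate.2
      ⟨by rw [IsAlgClosed.card_roots_eq_natDegree, charpoly_natDegree_eq_dim], h⟩
  have hchar : A.charpoly = (X - C 1) ^ Fintype.card n := by
    rw [(IsAlgClosed.splits _).eq_prod_roots_of_monic A.charpoly_monic, hroots,
      Multiset.map_replicate, Multiset.prod_replicate]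
  refine ⟨Fintype.card n, ?_⟩
  simpa [hchar] using A.aeval_self_charpoly

theorem eq_one_of_isNilpotent_sub_one_of_pow_eq_one {m : ℕ} (hm : (m : K) ≠ 0)
    (hA : A ^ m = 1) (hN : IsNilpotent (A - 1)) : A = 1 := by
  let f := toLinAlgEquiv' A
  have hf : Module.End.IsSemisimple f := by
    refine Module.End.isSemisimple_of_squarefree_aeval_eq_zero
      (separable_X_pow_sub_C 1 hm one_ne_zero).squarefree ?_
    rw [map_sub, aeval_X_pow, aeval_C, map_one, ← map_pow, hA, map_one, sub_self]
  have hN' : IsNilpotent (f - algebraMap K _ 1) := by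
    simpa [f] using hN.map (toLinAlgEquiv' (R := K) (n := n))
  have := Module.End.eq_zero_of_isNilpotent_isSemisimple hN'
    (Module.End.isSemisimple_sub_algebraMap_iff.2 hf)
  rw [sub_eq_zero] at this
  simpa [f] using congrArg (toLinAlgEquiv' (R := K) (n := n)).symm this

end Matrix

/-- If g ∈ GL_n(ℂ) has order a power of the prime p and tr(g) ∈ ℚ, then
tr(g) = n − p·t for some natural number t ≤ ⌊n/(p−1)⌋, and tr(g) = n only
for g = 1. -/
theorem trace_of_p_power_order_matrix (n p : ℕ) (hp : p.Prime)
    (g : GL (Fin n) ℂ) (hord : ∃ r : ℕ, g ^ p ^ r = 1)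
    (htr : ∃ q : ℚ, Matrix.trace (g : Matrix (Fin n) (Fin n) ℂ) = (q : ℂ)) :
    (∃ t : ℕ, t ≤ n / (p - 1) ∧
      Matrix.trace (g : Matrix (Fin n) (Fin n) ℂ) = (n : ℂ) - p * t) ∧
    (Matrix.trace (g : Matrix (Fin n) (Fin n) ℂ) = (n : ℂ) → g = 1) := by
  obtain ⟨r, hr⟩ := hord
  obtain ⟨q, hq⟩ := htr
  set A : Matrix (Fin n) (Fin n) ℂ := g.val
  -- The exponent `p ^ (r + 1)` keeps `r + 1 ≥ 1`, which the cyclotomic lemmas need.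
  have hA : A ^ p ^ (r + 1) = 1 := by
    rw [pow_succ, pow_mul, ← Units.val_pow_eq_pow_val, hr, Units.val_one, one_pow]
  have hm : p ^ (r + 1) ≠ 0 := pow_ne_zero _ hp.ne_zero
  have := NeZero.mk hm
  obtain ⟨ζ, hζ⟩ : ∃ ζ : ℂ, IsPrimitiveRoot ζ (p ^ (r + 1)) :=
    ⟨_, Complex.isPrimitiveRoot_exp _ hm⟩
  obtain ⟨E, hE⟩ := hζ.exists_map_pow_eq fun μ hμ => A.pow_eq_one_of_mem_roots_charpoly hA hμ
  have hcard : E.card = n := by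
    rw [← Multiset.card_map, hE, IsAlgClosed.card_roots_eq_natDegree,
      Matrix.charpoly_natDegree_eq_dim, Fintype.card_fin]
  have htrace : A.trace = (E.map (ζ ^ ·)).sum := by rw [hE, Matrix.trace_eq_sum_roots_charpoly]
  obtain ⟨z, hz⟩ := hζ.exists_int_eq_sum_map_pow (Nat.pos_of_ne_zero hm) (htrace ▸ hq)
  obtain ⟨t, ht, hzt⟩ := hζ.exists_eq_card_sub_mul hp hz
  refine ⟨⟨t, hcard ▸ ht, ?_⟩, fun hn => Units.ext ?_⟩
  · rw [htrace, hz, hzt, hcard]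
    push_cast
    rfl
  · have hzn : z = E.card := by
      rw [hcard]
      exact_mod_cast hz.symm.trans (htrace.symm.trans hn)
    refine A.eq_one_of_isNilpotent_sub_one_of_pow_eq_one (by exact_mod_cast hm) hA
      (Matrix.isNilpotent_sub_one_of_forall_mem_roots_charpoly ?_)
    rw [← hE]
    simpa using hζ.pow_eq_one_of_eq_card hp hz hzn
end

section
/- The quaternion group Q_8, realized as the group of complex 2×2 matrices {±I, ±g, ±h, ±gh} with g = [[0,−1],[1,0]] and h = [[i,0],[0,−i]], has all traces rational, but there is no invertible complex 2×2 matrix a such that a·x·a⁻¹ has all real entries for every x in the group. -/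
/-!
Conjugating Q₈ into real matrices would give real `G, H` with `G² = H² = -1` and `tr (G H) = 0`.
Over an ordered ring `X² = -1` forces `tr X = 0` and `det X = 1`. For traceless
`X = [[p, q], [r, -p]]`, `Y = [[e, f], [k, -e]]` of positive determinant we have `q r < -p²` and
`f k < -e²`, while `tr (X Y) = 0` says `q k + r f = -2 p e`; then
`4 p² e² = (q k + r f)² ≥ 4 (q r) (f k) > 4 p² e²`.
-/

namespace Matrix

variable {R : Type*} [CommRing R]

theorem det_eq_one_of_mul_self_eq_neg_one {X : Matrix (Fin 2) (Fin 2) R} (hX : X * X = -1)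
    (ht : X.trace = 0) : X.det = 1 := by
  have h00 : (X * X) 0 0 = -1 := by simp [hX]
  rw [mul_apply, Fin.sum_univ_two] at h00
  rw [trace_fin_two] at ht
  rw [det_fin_two]
  linear_combination -h00 + X 0 0 * ht

theorem conj_mul_conj {n : Type*} [Fintype n] [DecidableEq n] {a : Matrix n n R} (ha : IsUnit a)
    (x y : Matrix n n R) : a * x * a⁻¹ * (a * y * a⁻¹) = a * (x * y) * a⁻¹ := by
  rw [isUnit_iff_isUnit_det] at ha
  simp only [Matrix.mul_assoc, nonsing_inv_mul_cancel_left _ _ ha]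

section OrderedRing

variable [LinearOrder R] [IsStrictOrderedRing R]

theorem trace_eq_zero_of_mul_self_eq_neg_one {X : Matrix (Fin 2) (Fin 2) R} (hX : X * X = -1) :
    X.trace = 0 := by
  simp only [← ext_iff, Fin.forall_fin_two, mul_apply, Fin.sum_univ_two, neg_apply,
    one_apply_eq, one_apply_ne zero_ne_one, one_apply_ne one_ne_zero, neg_zero] at hX
  obtain ⟨⟨h00, h01⟩, h10, -⟩ := hX
  rw [trace_fin_two]
  by_contra ht
  have hX01 : X 0 1 = 0 := mul_left_cancel₀ ht (by linear_combination h01)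
  have hX10 : X 1 0 = 0 := mul_left_cancel₀ ht (by linear_combination h10)
  nlinarith [sq_nonneg (X 0 0)]

theorem trace_mul_ne_zero_of_det_pos {X Y : Matrix (Fin 2) (Fin 2) R}
    (hX : X.trace = 0) (hY : Y.trace = 0) (hdX : 0 < X.det) (hdY : 0 < Y.det) :
    (X * Y).trace ≠ 0 := by
  simp only [det_fin_two, trace_fin_two, mul_apply, Fin.sum_univ_two] at *
  generalize X 0 0 = p, X 0 1 = q, X 1 0 = r, X 1 1 = s at *
  generalize Y 0 0 = e, Y 0 1 = f, Y 1 0 = k, Y 1 1 = l at *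
  obtain rfl : s = -p := by linear_combination hX
  obtain rfl : l = -e := by linear_combination hY
  intro hXY
  have hsq : (q * k - r * f) ^ 2 + 4 * (q * r) * (f * k) = 4 * (p * e) ^ 2 := by
    linear_combination (q * k + r * f - 2 * p * e) * hXY
  linarith [sq_nonneg (q * k - r * f), mul_pos hdX hdY, mul_nonneg hdX.le (sq_nonneg e),
    mul_nonneg hdY.le (sq_nonneg p)]

theorem trace_mul_ne_zero_of_mul_self_eq_neg_one {X Y : Matrix (Fin 2) (Fin 2) R}
    (hX : X * X = -1) (hY : Y * Y = -1) : (X * Y).trace ≠ 0 := by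
  have htX := trace_eq_zero_of_mul_self_eq_neg_one hX
  have htY := trace_eq_zero_of_mul_self_eq_neg_one hY
  refine trace_mul_ne_zero_of_det_pos htX htY ?_ ?_
  · simp [det_eq_one_of_mul_self_eq_neg_one hX htX]
  · simp [det_eq_one_of_mul_self_eq_neg_one hY htY]

end OrderedRing

open Complex

def HasRealEntries {m n : Type*} (M : Matrix m n ℂ) : Prop :=
  ∀ i j, ∃ r : ℝ, M i j = r

theorem HasRealEntries.exists_mapMatrix_eq {n : Type*} [Fintype n] [DecidableEq n]
    {M : Matrix n n ℂ} (h : M.HasRealEntries) : ∃ X : Matrix n n ℝ, ofRealHom.mapMatrix X = M := by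
  choose r hr using h
  exact ⟨of r, by ext i j; simp [hr]⟩

theorem not_hasRealEntries_conj {x y : Matrix (Fin 2) (Fin 2) ℂ} (hx : x * x = -1)
    (hy : y * y = -1) (hxy : (x * y).trace = 0) {a : Matrix (Fin 2) (Fin 2) ℂ} (ha : IsUnit a) :
    ¬ ((a * x * a⁻¹).HasRealEntries ∧ (a * y * a⁻¹).HasRealEntries) := by
  rintro ⟨hax, hay⟩
  obtain ⟨X, hX⟩ := hax.exists_mapMatrix_eq
  obtain ⟨Y, hY⟩ := hay.exists_mapMatrix_eq
  have hinj : Function.Injective (ofRealHom.mapMatrix : Matrix (Fin 2) (Fin 2) ℝ →+* _) :=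
    map_injective ofReal_injective
  have hconj_neg_one : a * -1 * a⁻¹ = -1 := by
    rw [mul_neg_one, neg_mul, mul_nonsing_inv _ ((isUnit_iff_isUnit_det a).mp ha)]
  refine trace_mul_ne_zero_of_mul_self_eq_neg_one (X := X) (Y := Y) ?_ ?_ ?_
  · apply hinj
    rw [map_mul, hX, conj_mul_conj ha, hx, map_neg, map_one, hconj_neg_one]
  · apply hinj
    rw [map_mul, hY, conj_mul_conj ha, hy, map_neg, map_one, hconj_neg_one]
  · apply ofReal_injective
    rw [ofReal_zero, ← ofRealHom_eq_coe, AddMonoidHom.map_trace ofRealHom,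
      ← RingHom.mapMatrix_apply, map_mul, hX, hY, conj_mul_conj ha, trace_conj ha, hxy]

end Matrix

open Complex in
/-- The quaternion group Q₈ realized as the complex 2×2 matrices
{±1, ±g, ±h, ±gh} with g = [[0,−1],[1,0]], h = [[i,0],[0,−i]]: all traces
are rational, but no invertible complex matrix a conjugates all elements of
the group into matrices with real entries. -/
theorem quaternion_group_rational_traces_not_realizable_over_R :
    ∀ g h : Matrix (Fin 2) (Fin 2) ℂ,
      g = !![0, -1; 1, 0] → h = !![I, 0; 0, -I] →
      ∀ S : Set (Matrix (Fin 2) (Fin 2) ℂ),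
        S = {1, -1, g, -g, h, -h, g * h, -(g * h)} →
        (∀ x ∈ S, ∃ q : ℚ, Matrix.trace x = (q : ℂ)) ∧
        ¬ ∃ a : Matrix (Fin 2) (Fin 2) ℂ, IsUnit a ∧
            ∀ x ∈ S, ∀ i j : Fin 2, ∃ r : ℝ, (a * x * a⁻¹) i j = (r : ℂ) := by
  intro g h hg hh S hS
  have hg2 : g * g = -1 := by simp [hg, Matrix.one_fin_two]
  have hh2 : h * h = -1 := by simp [hh, Matrix.one_fin_two]
  have htg : g.trace = 0 := by simp [hg, Matrix.trace_fin_two]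
  have hth : h.trace = 0 := by simp [hh, Matrix.trace_fin_two]
  have htgh : (g * h).trace = 0 := by simp [hg, hh, Matrix.trace_fin_two]
  subst hS
  refine ⟨?_, ?_⟩
  · rintro x (rfl | rfl | rfl | rfl | rfl | rfl | rfl | rfl)
    exacts [⟨2, by simp⟩, ⟨-2, by simp⟩, ⟨0, by simp [htg]⟩, ⟨0, by simp [htg]⟩,
      ⟨0, by simp [hth]⟩, ⟨0, by simp [hth]⟩, ⟨0, by simp [htgh]⟩, ⟨0, by simp [htgh]⟩]
  · rintro ⟨a, ha, hreal⟩
    exact Matrix.not_hasRealEntries_conj hg2 hh2 htgh ha ⟨hreal g (by simp), hreal h (by simp)⟩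
end

section
/- Let ℓ be an odd prime, f a positive integer, and p a prime whose residue class generates (ℤ/ℓ²ℤ)^×. Then the ℓ-part of |GL_n(F_{p^f})| equals ℓ^{(1+v_ℓ(f))·⌊n/τ⌋} · (⌊n/τ⌋!)_ℓ, where τ = (ℓ−1)/gcd(ℓ−1, f) and v_ℓ is the ℓ-adic valuation. -/
/-!
Write `q = p ^ f`. Since `|GL_n(𝔽_q)| = q ^ (n(n-1)/2) · ∏_{j ≤ n} (q ^ j - 1)` and `ℓ ∤ q`,
only the factors `q ^ j - 1` contribute. Because `p` generates `(ℤ/ℓ²ℤ)ˣ`, it has order `ℓ - 1`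
modulo `ℓ` and `v_ℓ(p ^ (ℓ - 1) - 1) = 1`. Hence `q` has order `τ` modulo `ℓ`, and lifting the
exponent gives `v_ℓ(q ^ j - 1) = 1 + v_ℓ(f) + v_ℓ(j / τ)` when `τ ∣ j`, and `0` otherwise.
Summing over the multiples `j = kτ ≤ n` yields `⌊n/τ⌋ (1 + v_ℓ(f)) + v_ℓ(⌊n/τ⌋!)`.
-/

open Finset

namespace ZMod

theorem natCast_pow_eq_one_iff_dvd {a : ℕ} (ha : a ≠ 0) (k m : ℕ) :
    (a : ZMod k) ^ m = 1 ↔ k ∣ a ^ m - 1 := by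
  rw [← Nat.cast_pow, ← Nat.cast_one, natCast_eq_natCast_iff, Nat.ModEq.comm,
    Nat.modEq_iff_dvd' (Nat.one_le_pow _ _ (Nat.pos_of_ne_zero ha))]

theorem orderOf_natCast_dvd_iff {a : ℕ} (ha : a ≠ 0) (k m : ℕ) :
    orderOf (a : ZMod k) ∣ m ↔ k ∣ a ^ m - 1 :=
  orderOf_dvd_iff_pow_eq_one.trans (natCast_pow_eq_one_iff_dvd ha k m)

theorem orderOf_eq_totient_of_forall_mem_zpowers {n : ℕ} [NeZero n] {u : (ZMod n)ˣ}
    (hu : ∀ v, v ∈ Subgroup.zpowers u) : orderOf (u : ZMod n) = n.totient := by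
  rw [orderOf_units, orderOf_eq_card_of_forall_mem_zpowers hu, Nat.card_eq_fintype_card,
    card_units_eq_totient]

end ZMod

theorem padicValNat_pow_sub_one_of_not_orderOf_dvd {ℓ a m : ℕ} (ha : a ≠ 0)
    (h : ¬orderOf (a : ZMod ℓ) ∣ m) : padicValNat ℓ (a ^ m - 1) = 0 :=
  padicValNat.eq_zero_of_not_dvd (by rwa [← ZMod.orderOf_natCast_dvd_iff ha])

section OrderModPrime

variable {ℓ : ℕ} [hℓ : Fact ℓ.Prime] {a : ℕ}

theorem orderOf_natCast_dvd_sub_one (hℓa : ¬ℓ ∣ a) : orderOf (a : ZMod ℓ) ∣ ℓ - 1 :=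
  ZMod.orderOf_dvd_card_sub_one (by rwa [Ne, ZMod.natCast_eq_zero_iff])

theorem orderOf_natCast_pos (hℓa : ¬ℓ ∣ a) : 0 < orderOf (a : ZMod ℓ) :=
  Nat.pos_of_dvd_of_pos (orderOf_natCast_dvd_sub_one hℓa) (Nat.sub_pos_of_lt hℓ.out.one_lt)

variable (hodd : Odd ℓ) (ha : 1 < a) (hℓa : ¬ℓ ∣ a)
include hodd ha hℓa

theorem padicValNat_pow_sub_one_of_orderOf_dvd {m : ℕ} (hm : m ≠ 0)
    (hdvd : orderOf (a : ZMod ℓ) ∣ m) :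
    padicValNat ℓ (a ^ m - 1) =
      padicValNat ℓ (a ^ orderOf (a : ZMod ℓ) - 1) + padicValNat ℓ (m / orderOf (a : ZMod ℓ)) := by
  set d := orderOf (a : ZMod ℓ)
  obtain ⟨k, rfl⟩ := hdvd
  have hd : 0 < d := orderOf_natCast_pos hℓa
  have hk : k ≠ 0 := right_ne_zero_of_mul hm
  rw [Nat.mul_div_cancel_left k hd, pow_mul]
  simpa only [one_pow] using padicValNat.pow_sub_pow hodd (Nat.one_lt_pow hd.ne' ha)
    ((ZMod.orderOf_natCast_dvd_iff (by omega) ℓ d).mp dvd_rfl)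
    (fun h => hℓa (hℓ.out.dvd_of_dvd_pow h)) hk

theorem padicValNat_pow_sub_one {m : ℕ} (hm : m ≠ 0) :
    padicValNat ℓ (a ^ m - 1) =
      if orderOf (a : ZMod ℓ) ∣ m then
        padicValNat ℓ (a ^ orderOf (a : ZMod ℓ) - 1) + padicValNat ℓ (m / orderOf (a : ZMod ℓ))
      else 0 := by
  split_ifs with h
  · exact padicValNat_pow_sub_one_of_orderOf_dvd hodd ha hℓa hm h
  · exact padicValNat_pow_sub_one_of_not_orderOf_dvd (by omega) h

theorem padicValNat_pow_pow_orderOf_sub_one {f : ℕ} (hf : f ≠ 0) :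
    padicValNat ℓ ((a ^ f) ^ orderOf ((a : ZMod ℓ) ^ f) - 1) =
      padicValNat ℓ (a ^ orderOf (a : ZMod ℓ) - 1) + padicValNat ℓ f := by
  set d := orderOf (a : ZMod ℓ)
  set g := Nat.gcd d f
  have hd : 0 < d := orderOf_natCast_pos hℓa
  have hfd : f * (d / g) = f / g * d := by
    rw [← Nat.mul_div_assoc _ (Nat.gcd_dvd_left _ _),
      Nat.div_mul_right_comm (Nat.gcd_dvd_right _ _), mul_comm]
  have hg : 0 < g := Nat.gcd_pos_of_pos_left f hd
  have hfg : 0 < f / g :=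
    Nat.div_pos (Nat.le_of_dvd (Nat.pos_of_ne_zero hf) (Nat.gcd_dvd_right d f)) hg
  -- `g ∣ d ∣ ℓ - 1`
  have hℓg : ¬ℓ ∣ g := by
    have hgd := Nat.le_of_dvd hd (Nat.gcd_dvd_left d f)
    have hdℓ := Nat.le_of_dvd (Nat.sub_pos_of_lt hℓ.out.one_lt) (orderOf_natCast_dvd_sub_one hℓa)
    exact Nat.not_dvd_of_pos_of_lt hg (by omega)
  rw [orderOf_pow' _ hf, ← pow_mul, hfd, padicValNat_pow_sub_one_of_orderOf_dvd hodd ha hℓa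
      (Nat.mul_ne_zero hfg.ne' hd.ne') (dvd_mul_left d _),
    Nat.mul_div_cancel _ hd, padicValNat.div_of_dvd (Nat.gcd_dvd_right _ _),
    padicValNat.eq_zero_of_not_dvd hℓg, Nat.sub_zero]

theorem orderOf_natCast_sq_dvd :
    orderOf (a : ZMod (ℓ ^ 2)) ∣ orderOf (a : ZMod ℓ) * ℓ := by
  set d := orderOf (a : ZMod ℓ)
  have hd : 0 < d := orderOf_natCast_pos hℓa
  have hdℓ : d * ℓ ≠ 0 := Nat.mul_ne_zero hd.ne' hℓ.out.ne_zero
  have hne : a ^ d - 1 ≠ 0 := Nat.sub_ne_zero_of_lt (Nat.one_lt_pow hd.ne' ha)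
  have hval : 1 ≤ padicValNat ℓ (a ^ d - 1) := one_le_padicValNat_of_dvd hne
    ((ZMod.orderOf_natCast_dvd_iff (by omega) ℓ d).mp dvd_rfl)
  rw [ZMod.orderOf_natCast_dvd_iff (by omega),
    padicValNat_dvd_iff_le (Nat.sub_ne_zero_of_lt (Nat.one_lt_pow hdℓ ha)),
    padicValNat_pow_sub_one_of_orderOf_dvd hodd ha hℓa hdℓ (dvd_mul_right d ℓ),
    Nat.mul_div_cancel_left _ hd, padicValNat_self]
  exact Nat.succ_le_succ hval

variable (h : orderOf (a : ZMod (ℓ ^ 2)) = ℓ * (ℓ - 1))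
include h

theorem orderOf_natCast_eq_sub_one_of_orderOf_sq : orderOf (a : ZMod ℓ) = ℓ - 1 := by
  refine Nat.dvd_antisymm (orderOf_natCast_dvd_sub_one hℓa) ?_
  have hdvd := h ▸ orderOf_natCast_sq_dvd hodd ha hℓa
  rw [mul_comm _ ℓ] at hdvd
  exact Nat.dvd_of_mul_dvd_mul_left hℓ.out.pos hdvd

theorem padicValNat_pow_sub_one_eq_one_of_orderOf_sq :
    padicValNat ℓ (a ^ (ℓ - 1) - 1) = 1 := by
  have hℓ1 : 0 < ℓ - 1 := Nat.sub_pos_of_lt hℓ.out.one_lt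
  have hne : a ^ (ℓ - 1) - 1 ≠ 0 := Nat.sub_ne_zero_of_lt (Nat.one_lt_pow hℓ1.ne' ha)
  have hdvd : ℓ ∣ a ^ (ℓ - 1) - 1 := (ZMod.orderOf_natCast_dvd_iff (by omega) ℓ _).mp
    (orderOf_natCast_eq_sub_one_of_orderOf_sq hodd ha hℓa h ▸ dvd_rfl)
  have hndvd : ¬ℓ ^ 2 ∣ a ^ (ℓ - 1) - 1 := by
    rw [← ZMod.orderOf_natCast_dvd_iff (by omega), h]
    intro h'
    have := Nat.le_of_dvd hℓ1 h'
    nlinarith [hℓ.out.two_le]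
  rw [padicValNat_dvd_iff_le hne] at hndvd
  have := one_le_padicValNat_of_dvd hne hdvd
  omega

end OrderModPrime

theorem Matrix.card_GL_field_eq_pow_mul_prod {F : Type*} [Field F] [Fintype F] (n : ℕ) :
    Nat.card (GL (Fin n) F) =
      Fintype.card F ^ (n * (n - 1) / 2) * ∏ j ∈ range n, (Fintype.card F ^ (j + 1) - 1) := by
  set q := Fintype.card F
  rw [card_GL_field, Fin.prod_univ_eq_prod_range (fun i => q ^ n - q ^ i), ← sum_range_id,
    ← prod_pow_eq_pow_sum, ← prod_range_reflect (fun j => q ^ (j + 1) - 1), ← prod_mul_distrib]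
  refine prod_congr rfl fun i hi => ?_
  have hi : i < n := mem_range.mp hi
  rw [Nat.mul_sub, mul_one, ← pow_add]
  congr 2
  omega

theorem padicValNat_card_GL {F : Type*} [Field F] [Fintype F] {ℓ : ℕ} [hℓ : Fact ℓ.Prime]
    (hℓF : ¬ℓ ∣ Fintype.card F) (n : ℕ) :
    padicValNat ℓ (Nat.card (GL (Fin n) F)) =
      ∑ j ∈ range n, padicValNat ℓ (Fintype.card F ^ (j + 1) - 1) := by
  have hq : 1 < Fintype.card F := Fintype.one_lt_card
  have hne : ∀ j ∈ range n, Fintype.card F ^ (j + 1) - 1 ≠ 0 := fun j _ =>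
    Nat.sub_ne_zero_of_lt (Nat.one_lt_pow j.succ_ne_zero hq)
  rw [Matrix.card_GL_field_eq_pow_mul_prod, padicValNat.mul (by positivity)
    (prod_ne_zero_iff.mpr hne), padicValNat.pow, padicValNat.eq_zero_of_not_dvd hℓF, mul_zero,
    zero_add, ← Nat.factorization_def _ hℓ.out, Nat.factorization_prod_apply hne]
  exact sum_congr rfl fun j _ => Nat.factorization_def _ hℓ.out

theorem Finset.sum_range_ite_dvd_succ {M : Type*} [AddCommMonoid M] (τ n : ℕ) (g : ℕ → M) :
    ∑ j ∈ range n, (if τ ∣ j + 1 then g ((j + 1) / τ) else 0) =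
      ∑ k ∈ range (n / τ), g (k + 1) := by
  induction n with
  | zero => simp
  | succ n ih =>
    rw [sum_range_succ, ih]
    split_ifs with h
    · rw [Nat.succ_div_of_dvd h, sum_range_succ]
    · rw [Nat.succ_div_of_not_dvd h, add_zero]

theorem padicValNat_factorial_eq_sum (ℓ : ℕ) [Fact ℓ.Prime] (N : ℕ) :
    padicValNat ℓ N.factorial = ∑ k ∈ range N, padicValNat ℓ (k + 1) := by
  induction N with
  | zero => simp
  | succ N ih =>
    rw [Nat.factorial_succ, padicValNat.mul N.succ_ne_zero N.factorial_ne_zero, sum_range_succ, ih,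
      add_comm]

/-- Let ℓ be an odd prime, f > 0, and p a prime whose residue class
generates (ℤ/ℓ²ℤ)ˣ.  Then the ℓ-part of |GL_n(F_{p^f})| equals
ℓ^{(1+v_ℓ(f))·⌊n/τ⌋} · (⌊n/τ⌋!)_ℓ where τ = (ℓ−1)/gcd(ℓ−1, f). -/
theorem ell_part_card_GL (ℓ p f n : ℕ) (hℓ : ℓ.Prime) (hodd : Odd ℓ)
    (hp : p.Prime) (hf : 0 < f)
    (hgen : ∃ u : (ZMod (ℓ ^ 2))ˣ, (u : ZMod (ℓ ^ 2)) = (p : ZMod (ℓ ^ 2)) ∧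
      ∀ v : (ZMod (ℓ ^ 2))ˣ, v ∈ Subgroup.zpowers u)
    (F : Type) [Field F] [Fintype F] (hF : Fintype.card F = p ^ f) :
    ℓ ^ ((Nat.card (GL (Fin n) F)).factorization ℓ) =
      ℓ ^ ((1 + f.factorization ℓ) * (n / ((ℓ - 1) / Nat.gcd (ℓ - 1) f))) *
        ℓ ^ ((Nat.factorial (n / ((ℓ - 1) / Nat.gcd (ℓ - 1) f))).factorization ℓ) := by
  have : Fact ℓ.Prime := ⟨hℓ⟩
  obtain ⟨u, hu, hu_gen⟩ := hgen
  have hℓp : ¬ℓ ∣ p := (ZMod.isUnit_natCast_iff_not_dvd_pow hℓ two_pos).mp (hu ▸ u.isUnit)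
  have hord_sq : orderOf (p : ZMod (ℓ ^ 2)) = ℓ * (ℓ - 1) := by
    rw [← hu, ZMod.orderOf_eq_totient_of_forall_mem_zpowers hu_gen, Nat.totient_prime_pow_succ hℓ,
      pow_one]
  have hord : orderOf (p : ZMod ℓ) = ℓ - 1 :=
    orderOf_natCast_eq_sub_one_of_orderOf_sq hodd hp.one_lt hℓp hord_sq
  set τ := (ℓ - 1) / Nat.gcd (ℓ - 1) f
  have hq_ord : orderOf ((p ^ f : ℕ) : ZMod ℓ) = τ := by
    rw [Nat.cast_pow, orderOf_pow' _ hf.ne', hord]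
  have hq_val : padicValNat ℓ ((p ^ f) ^ τ - 1) = 1 + padicValNat ℓ f := by
    rw [← hq_ord, Nat.cast_pow, padicValNat_pow_pow_orderOf_sub_one hodd hp.one_lt hℓp hf.ne', hord,
      padicValNat_pow_sub_one_eq_one_of_orderOf_sq hodd hp.one_lt hℓp hord_sq]
  have hℓq : ¬ℓ ∣ p ^ f := fun h => hℓp (hℓ.dvd_of_dvd_pow h)
  simp only [Nat.factorization_def _ hℓ, ← pow_add]
  congr 1
  calc padicValNat ℓ (Nat.card (GL (Fin n) F))
      = ∑ j ∈ range n, padicValNat ℓ ((p ^ f) ^ (j + 1) - 1) := by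
        rw [padicValNat_card_GL (hF ▸ hℓq), hF]
    _ = ∑ j ∈ range n, if τ ∣ j + 1 then (1 + padicValNat ℓ f) + padicValNat ℓ ((j + 1) / τ)
          else 0 := sum_congr rfl fun j _ => by
        rw [padicValNat_pow_sub_one hodd (Nat.one_lt_pow hf.ne' hp.one_lt) hℓq j.succ_ne_zero,
          hq_ord, hq_val]
    _ = ∑ k ∈ range (n / τ), ((1 + padicValNat ℓ f) + padicValNat ℓ (k + 1)) :=
        sum_range_ite_dvd_succ τ n fun k => 1 + padicValNat ℓ f + padicValNat ℓ k
    _ = _ := by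
        rw [sum_add_distrib, sum_const, card_range, smul_eq_mul, padicValNat_factorial_eq_sum,
          mul_comm]
end

section
/- The kernel of the reduction homomorphism GL_n(ℤ_{(p)}) → GL_n(F_p) is torsion-free for every odd prime p; for p = 2, every nontrivial torsion element of the kernel has order 2, and the kernel of GL_n(ℤ_{(2)}) → GL_n(ℤ/4ℤ) is torsion-free. -/
/-!
Let `g = 1 + A` be of finite order in the kernel of reduction, `𝔪 = (p)` the maximal ideal and
`I` the ideal generated by the entries of `A`. Replacing `g` by a power, we may assume
`g ^ q = 1` with `q` prime, and expanding `(1 + A) ^ q = 1` gives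
`q • A = -∑_{j ≥ 2} (q choose j) • A ^ j`, so `q I ≤ ∑_{j ≥ 2} (q choose j) I ^ j`.
If `q ≠ p`, then `q` is a unit and `I ≤ I ^ 2 ≤ 𝔪 I`. If `q = p`, every term on the right lies
in `p 𝔪 I`: for `j < p` because `p ∣ (p choose j)`, and for `j = p` because
`I ^ p ≤ 𝔪 ^ (k (p - 1)) I` when `I ≤ 𝔪 ^ k`; this needs `k (p - 1) ≥ 2`, i.e. reduction
mod `p` for odd `p` and mod `4` for `p = 2`. Cancelling `p` gives `I ≤ 𝔪 I` again, and
Nakayama forces `I = 0`. For `p = 2` and reduction mod `2`, `g ^ 2 ≡ 1` mod `4`, so `g ^ 2 = 1`.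
-/

open IsLocalRing

open Finset in
theorem one_add_pow_eq_one_add_nsmul_add_sum {S : Type*} [Semiring S] (a : S) (q : ℕ) :
    (1 + a) ^ q = 1 + q • a + ∑ j ∈ Ico 2 (q + 1), q.choose j • a ^ j := by
  rcases q with _ | q
  · simp
  rw [add_comm 1 a, (Commute.one_right a).add_pow, sum_range_succ', sum_range_succ',
    sum_Ico_eq_sum_range, Nat.add_sub_cancel]
  simp only [nsmul_eq_mul, Nat.cast_comm, add_comm 2]
  simp only [Nat.reduceSubDiff, one_pow, mul_one, zero_add, pow_one, Nat.choose_one_right,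
    Nat.cast_add, Nat.cast_one, pow_zero, tsub_zero, Nat.choose_zero_right]
  abel

theorem Submonoid.eq_one_of_isOfFinOrder {M : Type*} [Monoid M] (S : Submonoid M)
    (hS : ∀ q : ℕ, q.Prime → ∀ y ∈ S, y ^ q = 1 → y = 1) {x : M} (hx : x ∈ S)
    (hfin : IsOfFinOrder x) : x = 1 := by
  by_contra hne
  have hq := Nat.minFac_prime (mt orderOf_eq_one_iff.mp hne)
  have hdvd := Nat.minFac_dvd (orderOf x)
  have hy := orderOf_pow_orderOf_div hfin.orderOf_pos.ne' hdvd
  have hyq : (x ^ (orderOf x / (orderOf x).minFac)) ^ (orderOf x).minFac = 1 := by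
    rw [← pow_mul, Nat.div_mul_cancel hdvd, pow_orderOf_eq_one]
  rw [hS _ hq _ (pow_mem hx _) hyq, orderOf_one] at hy
  exact hq.one_lt.ne hy

namespace IsLocalRing

variable {R : Type*} [CommRing R] [IsLocalRing R]

theorem isUnit_natCast_of_coprime {p q : ℕ} (hp : (p : R) ∈ maximalIdeal R)
    (hqp : q.Coprime p) : IsUnit (q : R) := by
  obtain ⟨u, v, h⟩ := (Nat.Coprime.isCoprime hqp).map (Int.castRingHom R)
  simp only [eq_intCast, Int.cast_natCast] at h
  rcases isUnit_or_isUnit_of_isUnit_add (h ▸ isUnit_one) with hu | hv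
  · exact isUnit_of_mul_isUnit_right hu
  · exact absurd (isUnit_of_mul_isUnit_right hv) ((mem_maximalIdeal _).mp hp)

theorem ker_le_maximalIdeal_sq {S : Type*} [CommRing S] [Nontrivial S] (f : R →+* S) {π : R}
    (hm : maximalIdeal R = Ideal.span {π}) (hπ : f π ≠ 0) :
    RingHom.ker f ≤ maximalIdeal R ^ 2 := by
  intro x hx
  obtain ⟨y, rfl⟩ :=
    Ideal.mem_span_singleton'.mp (hm ▸ le_maximalIdeal (RingHom.ker_ne_top f) hx)
  have hy : y ∈ maximalIdeal R := by
    by_contra hy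
    rw [RingHom.mem_ker, map_mul, ((notMem_maximalIdeal.mp hy).map f).mul_right_eq_zero] at hx
    exact hπ hx
  exact sq (maximalIdeal R) ▸ Ideal.mul_mem_mul hy (hm ▸ Ideal.mem_span_singleton_self π)

end IsLocalRing

namespace Matrix

variable {R : Type*} [CommRing R]

section Rectangular

variable {l m n : Type*}

def entryIdeal (A : Matrix m n R) : Ideal R :=
  Ideal.span (Set.range (Function.uncurry A))

theorem entryIdeal_le_iff {A : Matrix m n R} {I : Ideal R} :
    A.entryIdeal ≤ I ↔ ∀ i j, A i j ∈ I := by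
  rw [entryIdeal, Ideal.span_le, Set.range_subset_iff]
  exact Prod.forall

theorem apply_mem_entryIdeal (A : Matrix m n R) (i : m) (j : n) : A i j ∈ A.entryIdeal :=
  entryIdeal_le_iff.mp le_rfl i j

theorem entryIdeal_eq_bot_iff {A : Matrix m n R} : A.entryIdeal = ⊥ ↔ A = 0 := by
  rw [eq_bot_iff, entryIdeal_le_iff]
  simp [← Matrix.ext_iff]

theorem entryIdeal_add_le (A B : Matrix m n R) :
    (A + B).entryIdeal ≤ A.entryIdeal ⊔ B.entryIdeal :=
  entryIdeal_le_iff.mpr fun i j =>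
    Submodule.add_mem_sup (A.apply_mem_entryIdeal i j) (B.apply_mem_entryIdeal i j)

theorem entryIdeal_smul (c : R) (A : Matrix m n R) :
    (c • A).entryIdeal = Ideal.span {c} * A.entryIdeal := by
  rw [entryIdeal, entryIdeal, Ideal.span_mul_span', Set.singleton_mul, ← Set.range_comp]
  rfl

theorem entryIdeal_mul_le [Fintype n] (A : Matrix l n R) (B : Matrix n m R) :
    (A * B).entryIdeal ≤ A.entryIdeal * B.entryIdeal :=
  entryIdeal_le_iff.mpr fun i j => Ideal.sum_mem _ fun k _ =>
    Ideal.mul_mem_mul (A.apply_mem_entryIdeal i k) (B.apply_mem_entryIdeal k j)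

theorem eq_zero_of_entryIdeal_le_maximalIdeal_mul [IsLocalRing R] [Finite m] [Finite n]
    {A : Matrix m n R} (h : A.entryIdeal ≤ maximalIdeal R * A.entryIdeal) : A = 0 := by
  rw [← entryIdeal_eq_bot_iff]
  exact Submodule.eq_bot_of_le_smul_of_le_jacobson_bot _ _
    (Submodule.fg_span (Set.finite_range _)) h (by rw [jacobson_eq_maximalIdeal ⊥ bot_ne_top])

end Rectangular

variable {n : Type*} [DecidableEq n]

theorem entryIdeal_sub_one_le_ker_iff {S : Type*} [CommRing S] {f : R →+* S}
    {x : Matrix n n R} : (x - 1).entryIdeal ≤ RingHom.ker f ↔ x.map f = 1 := by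
  rw [entryIdeal_le_iff, ← Matrix.ext_iff]
  refine forall₂_congr fun i j => ?_
  rw [RingHom.mem_ker, sub_apply, map_sub, sub_eq_zero, map_apply, one_apply, one_apply,
    apply_ite f, map_one, map_zero]

variable [Fintype n]

theorem entryIdeal_pow_le (A : Matrix n n R) (k : ℕ) :
    (A ^ k).entryIdeal ≤ A.entryIdeal ^ k := by
  induction k with
  | zero => simp
  | succ k ih =>
    rw [pow_succ, pow_succ]
    exact (entryIdeal_mul_le _ _).trans (Ideal.mul_mono_left ih)

theorem entryIdeal_sq_sub_one_le {x : Matrix n n R} {I : Ideal R}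
    (hx : (x - 1).entryIdeal ≤ I) (h2 : (2 : R) ∈ I) : (x ^ 2 - 1).entryIdeal ≤ I ^ 2 := by
  have hsq : x ^ 2 - 1 = (x - 1) * (x - 1) + (2 : R) • (x - 1) := by
    rw [two_smul]
    noncomm_ring
  rw [hsq, sq]
  refine (entryIdeal_add_le _ _).trans (sup_le ?_ ?_)
  · exact (entryIdeal_mul_le _ _).trans (Ideal.mul_mono hx hx)
  · rw [entryIdeal_smul]
    exact Ideal.mul_mono ((Ideal.span_singleton_le_iff_mem I).mpr h2) hx

theorem span_natCast_mul_entryIdeal_sub_one_le {x : Matrix n n R} {q : ℕ} (hx : x ^ q = 1)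
    {K : Ideal R}
    (hK : ∀ j ∈ Finset.Ico 2 (q + 1),
      Ideal.span {(q.choose j : R)} * (x - 1).entryIdeal ^ j ≤ K) :
    Ideal.span {(q : R)} * (x - 1).entryIdeal ≤ K := by
  have hrel : (q : R) • (x - 1) =
      -∑ j ∈ Finset.Ico 2 (q + 1), (q.choose j : R) • (x - 1) ^ j := by
    have := one_add_pow_eq_one_add_nsmul_add_sum (x - 1) q
    rw [add_sub_cancel, hx, add_assoc, left_eq_add] at this
    simpa only [Nat.cast_smul_eq_nsmul] using eq_neg_of_add_eq_zero_left this
  rw [← entryIdeal_smul, hrel, entryIdeal_le_iff]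
  intro i j
  rw [neg_apply, sum_apply]
  refine neg_mem (Ideal.sum_mem _ fun k hk => hK k hk ?_)
  exact Ideal.mul_mono_right (entryIdeal_pow_le _ k)
    (entryIdeal_smul _ ((x - 1) ^ k) ▸ apply_mem_entryIdeal _ i j)

theorem eq_one_of_pow_eq_one_of_isUnit [IsLocalRing R] {x : Matrix n n R} {q : ℕ}
    (hq : IsUnit (q : R)) (hx : x ^ q = 1) (hxm : (x - 1).entryIdeal ≤ maximalIdeal R) :
    x = 1 := by
  set I := (x - 1).entryIdeal
  rw [← sub_eq_zero]
  apply eq_zero_of_entryIdeal_le_maximalIdeal_mul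
  have hI := span_natCast_mul_entryIdeal_sub_one_le hx (K := maximalIdeal R * I) fun j hj =>
    calc Ideal.span {(q.choose j : R)} * I ^ j ≤ I ^ 2 :=
          Ideal.mul_le_right.trans (Ideal.pow_le_pow_right (Finset.mem_Ico.mp hj).1)
      _ ≤ maximalIdeal R * I := sq I ▸ Ideal.mul_mono_left hxm
  rwa [Ideal.span_singleton_eq_top.mpr hq, Ideal.top_mul] at hI

theorem eq_one_of_pow_prime_eq_one [IsLocalRing R] [IsDomain R] {p : ℕ} (hp : p.Prime)
    (hm : maximalIdeal R = Ideal.span {(p : R)}) (hp0 : (p : R) ≠ 0) {k : ℕ}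
    (hk : 2 ≤ k * (p - 1)) {x : Matrix n n R} (hx : x ^ p = 1)
    (hxm : (x - 1).entryIdeal ≤ maximalIdeal R ^ k) : x = 1 := by
  set I := (x - 1).entryIdeal
  set M := maximalIdeal R
  have hIM : I ≤ M := hxm.trans (Ideal.pow_le_self (by rintro rfl; simp at hk))
  rw [← sub_eq_zero]
  apply eq_zero_of_entryIdeal_le_maximalIdeal_mul
  rw [← Ideal.span_singleton_mul_right_mono hp0]
  refine span_natCast_mul_entryIdeal_sub_one_le hx fun j hj => ?_
  obtain ⟨h2j, hjp⟩ := Finset.mem_Ico.mp hj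
  rcases (Nat.lt_succ_iff.mp hjp).lt_or_eq with hjp | hjp
  · obtain ⟨c, hc⟩ := hp.dvd_choose_self (by omega) hjp
    rw [hc, Nat.cast_mul, ← Ideal.span_singleton_mul_span_singleton, mul_assoc]
    refine Ideal.mul_mono_right (Ideal.mul_le_right.trans ?_)
    exact (Ideal.pow_le_pow_right h2j).trans (sq I ▸ Ideal.mul_mono_left hIM)
  · rw [hjp, Nat.choose_self, Nat.cast_one, Ideal.span_singleton_one, Ideal.top_mul]
    calc I ^ p = I ^ (p - 1) * I := (pow_sub_one_mul hp.ne_zero I).symm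
      _ ≤ (M ^ k) ^ (p - 1) * I := Ideal.mul_mono_left (Ideal.pow_right_mono hxm _)
      _ ≤ M ^ 2 * I := by
        rw [← pow_mul]
        exact Ideal.mul_mono_left (Ideal.pow_le_pow_right hk)
      _ = M * (M * I) := by rw [sq, mul_assoc]
      _ = Ideal.span {(p : R)} * (M * I) := by rw [← hm]

end Matrix

namespace Matrix.GeneralLinearGroup

variable {R S : Type*} [CommRing R] [CommRing S] {n : Type*} [Fintype n] [DecidableEq n]

theorem map_eq_one_iff {f : R →+* S} {g : GL n R} :
    map f g = 1 ↔ ((g : Matrix n n R) - 1).entryIdeal ≤ RingHom.ker f :=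
  Units.ext_iff.trans entryIdeal_sub_one_le_ker_iff.symm

theorem eq_one_of_map_eq_one_of_isOfFinOrder [IsLocalRing R] [IsDomain R] {p : ℕ}
    (hp : p.Prime) (hm : maximalIdeal R = Ideal.span {(p : R)}) (hp0 : (p : R) ≠ 0) {k : ℕ}
    (hk : 2 ≤ k * (p - 1)) (f : R →+* S) (hf : RingHom.ker f ≤ maximalIdeal R ^ k)
    {g : GL n R} (hg : map f g = 1) (hfin : IsOfFinOrder g) : g = 1 := by
  refine (MonoidHom.mker (map f)).eq_one_of_isOfFinOrder (fun q hq y hy hyq => ?_) hg hfin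
  have hyk := (map_eq_one_iff.mp (MonoidHom.mem_mker.mp hy)).trans hf
  have hyq' : (y : Matrix n n R) ^ q = 1 := by
    rw [← Units.val_pow_eq_pow_val, hyq, Units.val_one]
  rw [← Units.val_eq_one]
  rcases eq_or_ne q p with rfl | hqp
  · exact eq_one_of_pow_prime_eq_one hp hm hp0 hk hyq' hyk
  · have hpq : q.Coprime p := (Nat.coprime_primes hq hp).mpr hqp
    refine eq_one_of_pow_eq_one_of_isUnit ?_ hyq' (hyk.trans (Ideal.pow_le_self ?_))
    · exact isUnit_natCast_of_coprime (hm ▸ Ideal.mem_span_singleton_self _) hpq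
    · rintro rfl
      simp at hk

end Matrix.GeneralLinearGroup

open Matrix

/-- The kernel of GL_n(ℤ_(p)) → GL_n(F_p) is torsion-free for odd primes p;
for p = 2 every nontrivial torsion element of the kernel has order 2, and
the kernel of GL_n(ℤ_(2)) → GL_n(ℤ/4ℤ) is torsion-free.  (A ring hom from
ℤ_(p) to ZMod p, resp. ZMod 4, is unique, namely reduction of entries.) -/
theorem torsion_in_kernel_of_reduction_ZLocalization (n p : ℕ) (hp : p.Prime)
    [h : (Ideal.span {(p : ℤ)}).IsPrime] :
    (Odd p → ∀ f : Localization.AtPrime (Ideal.span {(p : ℤ)}) →+* ZMod p,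
      ∀ g : GL (Fin n) (Localization.AtPrime (Ideal.span {(p : ℤ)})),
        Matrix.GeneralLinearGroup.map f g = 1 → IsOfFinOrder g → g = 1) ∧
    (p = 2 → ∀ f : Localization.AtPrime (Ideal.span {(p : ℤ)}) →+* ZMod p,
      ∀ g : GL (Fin n) (Localization.AtPrime (Ideal.span {(p : ℤ)})),
        Matrix.GeneralLinearGroup.map f g = 1 → IsOfFinOrder g → g ≠ 1 →
          orderOf g = 2) ∧
    (p = 2 → ∀ f : Localization.AtPrime (Ideal.span {(p : ℤ)}) →+* ZMod 4,
      ∀ g : GL (Fin n) (Localization.AtPrime (Ideal.span {(p : ℤ)})),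
        Matrix.GeneralLinearGroup.map f g = 1 → IsOfFinOrder g → g = 1) := by
  set R := Localization.AtPrime (Ideal.span {(p : ℤ)})
  have : Fact (1 < p) := ⟨hp.one_lt⟩
  have hm : maximalIdeal R = Ideal.span {(p : R)} := by
    rw [← IsLocalization.AtPrime.map_eq_maximalIdeal (Ideal.span {(p : ℤ)}) R, Ideal.map_span,
      Set.image_singleton, map_natCast]
  have hp0 : (p : R) ≠ 0 := by
    rw [← map_natCast (algebraMap ℤ R)]
    exact IsLocalization.to_map_ne_zero_of_mem_nonZeroDivisors _
      (Ideal.span {(p : ℤ)}).primeCompl_le_nonZeroDivisors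
      (mem_nonZeroDivisors_of_ne_zero (by exact_mod_cast hp.ne_zero))
  refine ⟨fun hodd f g hg hfin => ?_, ?_, ?_⟩
  · refine GeneralLinearGroup.eq_one_of_map_eq_one_of_isOfFinOrder hp hm hp0 (k := 1) ?_ f
      (by rw [pow_one]; exact le_maximalIdeal (RingHom.ker_ne_top f)) hg hfin
    obtain ⟨r, rfl⟩ := hodd
    have := hp.two_le
    omega
  · rintro rfl f g hg hfin hne
    have hg2 : GeneralLinearGroup.map (Ideal.Quotient.mk (maximalIdeal R ^ 2)) (g ^ 2) = 1 := by
      rw [GeneralLinearGroup.map_eq_one_iff, Ideal.mk_ker, Units.val_pow_eq_pow_val]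
      refine entryIdeal_sq_sub_one_le ((GeneralLinearGroup.map_eq_one_iff.mp hg).trans
        (le_maximalIdeal (RingHom.ker_ne_top f))) ?_
      simp [hm]
    exact orderOf_eq_prime (GeneralLinearGroup.eq_one_of_map_eq_one_of_isOfFinOrder hp hm hp0
      le_rfl _ Ideal.mk_ker.le hg2 hfin.pow) hne
  · rintro rfl f g hg hfin
    have : Fact (1 < 4) := ⟨by norm_num⟩
    refine GeneralLinearGroup.eq_one_of_map_eq_one_of_isOfFinOrder hp hm hp0 le_rfl f
      (ker_le_maximalIdeal_sq f hm ?_) hg hfin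
    rw [map_natCast]
    decide
end

section
/- Let G be a finite group, k a field, θ an automorphism of k with θ² = id, and V a finite-dimensional irreducible k[G]-module such that the dual module V* is isomorphic to the θ-twist V^θ. If char k ≠ 2, then G preserves a non-singular form β on V that is either hermitian or skew-hermitian with respect to θ. -/
/-!
Transposing `e` gives a non-singular `G`-invariant sesquilinear form `B v w = e w v`. The radical
of its hermitian part `B + τ B` is a `G`-submodule, hence `0` or `V`. In the first case `B + τ B` is
the required form; in the second `τ B = -B`, so the skew-hermitian part `B - τ B = 2 • B` is
non-singular because `2 ≠ 0`.
-/

namespace LinearMap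

variable {k V : Type*} [Field k] [AddCommGroup V] [Module k V] {θ : k →+* k}

-- The involution `τ` of the paper.
def conjFlip (hθ : ∀ a, θ (θ a) = a) (B : V →ₗ[k] V →ₛₗ[θ] k) : V →ₗ[k] V →ₛₗ[θ] k :=
  mk₂'ₛₗ (RingHom.id k) θ (fun v w => θ (B w v))
    (fun v v' w => by simp only [map_add])
    (fun a v w => by simp [hθ])
    (fun v w w' => by simp only [map_add, add_apply])
    (fun a v w => by simp)

variable {hθ : ∀ a, θ (θ a) = a}

@[simp]
theorem conjFlip_apply (B : V →ₗ[k] V →ₛₗ[θ] k) (v w : V) :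
    conjFlip hθ B v w = θ (B w v) :=
  rfl

theorem add_conjFlip_apply_swap (B : V →ₗ[k] V →ₛₗ[θ] k) (v w : V) :
    (B + conjFlip hθ B) w v = θ ((B + conjFlip hθ B) v w) := by
  simp [hθ, add_comm]

theorem sub_conjFlip_apply_swap (B : V →ₗ[k] V →ₛₗ[θ] k) (v w : V) :
    (B - conjFlip hθ B) w v = -θ ((B - conjFlip hθ B) v w) := by
  simp [hθ]

variable {G : Type*} [Group G]

def IsInvariantForm (ρ : Representation k G V) (B : V →ₗ[k] V →ₛₗ[θ] k) : Prop :=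
  ∀ g v w, B (ρ g v) (ρ g w) = B v w

namespace IsInvariantForm

variable {ρ : Representation k G V} {B B' : V →ₗ[k] V →ₛₗ[θ] k}

theorem conjFlip (hB : IsInvariantForm ρ B) : IsInvariantForm ρ (conjFlip hθ B) :=
  fun g v w => by simp [hB g w v]

theorem add (hB : IsInvariantForm ρ B) (hB' : IsInvariantForm ρ B') :
    IsInvariantForm ρ (B + B') :=
  fun g v w => by simp [hB g v w, hB' g v w]

theorem sub (hB : IsInvariantForm ρ B) (hB' : IsInvariantForm ρ B') :
    IsInvariantForm ρ (B - B') :=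
  fun g v w => by simp [hB g v w, hB' g v w]

theorem apply_mem_ker (hB : IsInvariantForm ρ B) (g : G) {v : V} (hv : v ∈ ker B) :
    ρ g v ∈ ker B := by
  refine mem_ker.2 (ext fun w => ?_)
  rw [zero_apply, ← ρ.self_inv_apply g w, hB, mem_ker.1 hv, zero_apply]

theorem ker_eq_bot_or_eq_zero (hB : IsInvariantForm ρ B)
    (hirr : ∀ W : Submodule k V, (∀ g : G, ∀ v ∈ W, ρ g v ∈ W) → W = ⊥ ∨ W = ⊤) :
    ker B = ⊥ ∨ B = 0 :=
  (hirr _ fun g _ hv => hB.apply_mem_ker g hv).imp_right ker_eq_top.1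

end IsInvariantForm

end LinearMap

open LinearMap

variable {k V G : Type*} [Field k] [AddCommGroup V] [Module k V] [Group G] {θ : k →+* k}

theorem exists_invariant_hermitian_or_skew_of_ker_eq_bot (h2 : (2 : k) ≠ 0)
    (hθ : ∀ a, θ (θ a) = a) {ρ : Representation k G V}
    (hirr : ∀ W : Submodule k V, (∀ g : G, ∀ v ∈ W, ρ g v ∈ W) → W = ⊥ ∨ W = ⊤)
    {B : V →ₗ[k] V →ₛₗ[θ] k} (hB : IsInvariantForm ρ B) (hker : ker B = ⊥) :
    ∃ β : V →ₗ[k] V →ₛₗ[θ] k, IsInvariantForm ρ β ∧ ker β = ⊥ ∧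
      ((∀ v w, β w v = θ (β v w)) ∨ (∀ v w, β w v = -θ (β v w))) := by
  rcases (hB.add (hB.conjFlip (hθ := hθ))).ker_eq_bot_or_eq_zero hirr with hplus | hplus
  · exact ⟨B + conjFlip hθ B, hB.add hB.conjFlip, hplus, Or.inl (add_conjFlip_apply_swap B)⟩
  -- If the hermitian part vanishes then `τ B = -B`, so the skew-hermitian part is `2 • B`.
  have hminus : B - conjFlip hθ B = (2 : k) • B := by
    ext v w
    have h := congr($hplus v w)
    simp only [LinearMap.add_apply, LinearMap.sub_apply, LinearMap.smul_apply,
      LinearMap.zero_apply, smul_eq_mul] at h ⊢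
    linear_combination -h
  refine ⟨B - conjFlip hθ B, hB.sub hB.conjFlip, ?_, Or.inr (sub_conjFlip_apply_swap B)⟩
  rw [hminus, ker_smul _ _ h2, hker]

theorem exists_invariant_hermitian_or_skew_form_general
    (G : Type) [Group G] (k : Type) [Field k]
    (hchar : ringChar k ≠ 2) (θ : k →+* k) (hθ : ∀ a, θ (θ a) = a)
    (V : Type) [AddCommGroup V] [Module k V] (ρ : Representation k G V)
    (hirr : ∀ W : Submodule k V, (∀ g : G, ∀ v ∈ W, ρ g v ∈ W) → W = ⊥ ∨ W = ⊤)
    (e : V → Module.Dual k V)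
    (he_add : ∀ v w, e (v + w) = e v + e w)
    (he_smul : ∀ (a : k) (v : V), e (a • v) = θ a • e v)
    (he_bij : Function.Bijective e)
    (he_equiv : ∀ (g : G) (v : V), e (ρ g v) = (e v).comp (ρ g⁻¹)) :
    ∃ β : V → V → k,
      (∀ v w w', β v (w + w') = β v w + β v w') ∧
      (∀ v v' w, β (v + v') w = β v w + β v' w) ∧
      (∀ (a : k) (v w : V), β (a • v) w = a * β v w) ∧
      (∀ (a : k) (v w : V), β v (a • w) = θ a * β v w) ∧
      (∀ (g : G) (v w : V), β (ρ g v) (ρ g w) = β v w) ∧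
      (∀ v, (∀ w, β v w = 0) → v = 0) ∧
      ((∀ v w, β w v = θ (β v w)) ∨ (∀ v w, β w v = -θ (β v w))) := by
  let E : V →ₛₗ[θ] Module.Dual k V := ⟨⟨e, he_add⟩, he_smul⟩
  have hE : IsInvariantForm ρ E.flip := fun g v w => by
    simp [E, he_equiv, ρ.inv_self_apply]
  have hker : ker E.flip = ⊥ := ker_eq_bot'.2 fun v hv => by
    refine (Module.forall_dual_apply_eq_zero_iff k v).1 fun φ => ?_
    obtain ⟨w, rfl⟩ := he_bij.2 φ
    exact congr($hv w)
  obtain ⟨β, hβ, hβker, hsymm⟩ :=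
    exists_invariant_hermitian_or_skew_of_ker_eq_bot (Ring.two_ne_zero hchar) hθ hirr hE hker
  refine ⟨fun v w => β v w, fun v w w' => by simp, fun v v' w => by simp,
    fun a v w => by simp, fun a v w => by simp, hβ,
    fun v hv => ker_eq_bot'.1 hβker v (ext hv), hsymm⟩

/-- Let G be a finite group, k a field of characteristic ≠ 2, θ a ring
automorphism of k with θ² = id, and V a finite-dimensional irreducible
k[G]-module whose dual V* is isomorphic (as a k[G]-module, θ-semilinearly)
to the twist V^θ — i.e. there is a bijective additive θ-semilinear
G-equivariant map e : V → V*.  Then G preserves a non-singular form β on V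
that is hermitian or skew-hermitian with respect to θ. -/
theorem exists_invariant_hermitian_or_skew_form
    (G : Type) [Group G] [Finite G] (k : Type) [Field k]
    (hchar : ringChar k ≠ 2) (θ : k →+* k) (hθ : ∀ a, θ (θ a) = a)
    (V : Type) [AddCommGroup V] [Module k V] [FiniteDimensional k V]
    [Nontrivial V] (ρ : Representation k G V)
    (hirr : ∀ W : Submodule k V, (∀ g : G, ∀ v ∈ W, ρ g v ∈ W) → W = ⊥ ∨ W = ⊤)
    (e : V → Module.Dual k V)
    (he_add : ∀ v w, e (v + w) = e v + e w)
    (he_smul : ∀ (a : k) (v : V), e (a • v) = θ a • e v)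
    (he_bij : Function.Bijective e)
    (he_equiv : ∀ (g : G) (v : V), e (ρ g v) = (e v).comp (ρ g⁻¹)) :
    ∃ β : V → V → k,
      (∀ v w w', β v (w + w') = β v w + β v w') ∧
      (∀ v v' w, β (v + v') w = β v w + β v' w) ∧
      (∀ (a : k) (v w : V), β (a • v) w = a * β v w) ∧
      (∀ (a : k) (v w : V), β v (a • w) = θ a * β v w) ∧
      (∀ (g : G) (v w : V), β (ρ g v) (ρ g w) = β v w) ∧
      (∀ v, (∀ w, β v w = 0) → v = 0) ∧
      ((∀ v w, β w v = θ (β v w)) ∨ (∀ v w, β w v = -θ (β v w))) :=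
  exists_invariant_hermitian_or_skew_form_general G k hchar θ hθ V ρ hirr e he_add he_smul he_bij
    he_equiv
end
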